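/- arXiv:1405.7874 — 3 statements merged into one kernel-verified Lean document; each statement's English description precedes it below -/
import Mathlib

section
/- A connected irreducible graph with clique number 2 is CIS if and only if it is isomorphic to K₂. -/
/-!
In a triangle-free graph every edge `{w, u}` is a maximal clique. If the graph is CIS and `v`
is another neighbour of `w`, a vertex `x` adjacent to `u` but not to `v` would give a stable set
`{v, x}` whose maximal extensions avoid both `u` (a neighbour of `x`) and `w` (a neighbour of `v`).
Hence any two neighbours of a vertex have the same neighbourhood, so by irreducibility every
vertex has degree at most one, and a connected such graph with an edge is `K₂`.
-/

open SimpleGraph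

variable {V : Type*}

/-- A set of vertices is stable (independent) if no two of its vertices are adjacent. -/
def SimpleGraph.IsStableSet (G : SimpleGraph V) (s : Set V) : Prop :=
  s.Pairwise fun u v => ¬ G.Adj u v

/-- A graph is CIS if every maximal clique and every maximal stable set intersect. -/
def SimpleGraph.IsCIS (G : SimpleGraph V) : Prop :=
  ∀ C S : Set V, Maximal G.IsClique C → Maximal G.IsStableSet S → (C ∩ S).Nonempty

/-- A graph is irreducible if no two distinct vertices have the same open neighborhood. -/
def SimpleGraph.Irreducible (G : SimpleGraph V) : Prop :=
  ∀ u v : V, G.neighborSet u = G.neighborSet v → u = v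

namespace SimpleGraph

variable {G : SimpleGraph V} {u v w : V}

lemma IsStableSet.exists_maximal_superset {s : Set V} (hs : G.IsStableSet s) :
    ∃ M, s ⊆ M ∧ Maximal G.IsStableSet M :=
  zorn_subset_nonempty {t | G.IsStableSet t}
    (fun c hc hchain _ => ⟨⋃₀ c, hchain.pairwise_sUnion.mpr hc, fun _ => Set.subset_sUnion_of_mem⟩)
    s hs

lemma cliqueFree_of_cliqueNum_lt {n : ℕ} (h0 : G.cliqueNum ≠ 0) (hn : G.cliqueNum < n) :
    G.CliqueFree n := by
  intro s hs
  have hbdd : BddAbove {n | ∃ s, G.IsNClique n s} := by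
    by_contra h
    exact h0 (Nat.sSup_of_not_bddAbove h)
  exact (le_csSup hbdd ⟨s, hs⟩).not_gt hn

lemma exists_adj_of_one_lt_cliqueNum (h : 1 < G.cliqueNum) : ∃ u v, G.Adj u v := by
  obtain ⟨s, hs⟩ := G.exists_isNClique_cliqueNum
  obtain ⟨u, hu, v, hv, huv⟩ := Finset.one_lt_card.mp (hs.card_eq ▸ h)
  exact ⟨u, v, hs.isClique hu hv huv⟩

lemma maximal_isClique_pair (h3 : G.CliqueFree 3) (huv : G.Adj u v) :
    Maximal G.IsClique {u, v} := by
  classical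
  refine ⟨isClique_pair.mpr fun _ => huv, fun t ht hsub x hx => ?_⟩
  by_contra hxuv
  simp only [Set.mem_insert_iff, Set.mem_singleton_iff, not_or] at hxuv
  exact h3 {x, u, v} <| is3Clique_triple_iff.mpr
    ⟨ht hx (hsub (by simp)) hxuv.1, ht hx (hsub (by simp)) hxuv.2, huv⟩

lemma IsCIS.exists_mem_forall_not_adj (hG : G.IsCIS) {C S : Set V} (hC : Maximal G.IsClique C)
    (hS : G.IsStableSet S) : ∃ c ∈ C, ∀ s ∈ S, ¬ G.Adj c s := by
  obtain ⟨M, hSM, hM⟩ := hS.exists_maximal_superset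
  obtain ⟨c, hcC, hcM⟩ := hG C M hC hM
  exact ⟨c, hcC, fun s hs hcs => hM.1 hcM (hSM hs) hcs.ne hcs⟩

lemma IsCIS.neighborSet_subset_of_adj_of_adj (hG : G.IsCIS) (h3 : G.CliqueFree 3)
    (hwu : G.Adj w u) (hwv : G.Adj w v) : G.neighborSet u ⊆ G.neighborSet v := by
  intro x hux
  by_contra hvx
  have hstable : G.IsStableSet {v, x} := Set.pairwise_pair.mpr fun _ => ⟨hvx, fun h => hvx h.symm⟩
  obtain ⟨c, hc, hcS⟩ := hG.exists_mem_forall_not_adj (maximal_isClique_pair h3 hwu.symm) hstable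
  rcases hc with rfl | rfl
  · exact hcS x (by simp) hux
  · exact hcS v (by simp) hwv

lemma IsCIS.eq_of_adj_of_adj (hG : G.IsCIS) (h3 : G.CliqueFree 3) (hirr : G.Irreducible)
    (hwu : G.Adj w u) (hwv : G.Adj w v) : u = v :=
  hirr u v <| (hG.neighborSet_subset_of_adj_of_adj h3 hwu hwv).antisymm
    (hG.neighborSet_subset_of_adj_of_adj h3 hwv hwu)

lemma Reachable.mem_of_forall_adj_mem {s : Set V} (hs : ∀ u ∈ s, ∀ v, G.Adj u v → v ∈ s)
    (huv : G.Reachable u v) (hu : u ∈ s) : v ∈ s := by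
  rw [reachable_iff_reflTransGen] at huv
  induction huv with
  | refl => exact hu
  | tail _ hadj ih => exact hs _ ih _ hadj

lemma Preconnected.eq_or_eq_of_adj (hG : G.Preconnected)
    (hdeg : ∀ w u v, G.Adj w u → G.Adj w v → u = v) (huv : G.Adj u v) (x : V) :
    x = u ∨ x = v := by
  refine (hG u x).mem_of_forall_adj_mem (s := {u, v}) ?_ (by simp)
  rintro y (rfl | rfl) z hyz
  · exact Or.inr (hdeg _ _ _ hyz huv)
  · exact Or.inl (hdeg _ _ _ hyz huv.symm)

lemma nonempty_iso_top_fin_two (huv : G.Adj u v) (hall : ∀ x, x = u ∨ x = v) :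
    Nonempty (G ≃g (⊤ : SimpleGraph (Fin 2))) := by
  have htop : G = ⊤ := by
    ext x y
    rcases hall x with rfl | rfl <;> rcases hall y with rfl | rfl <;>
      simp [huv, huv.symm, huv.ne, huv.ne.symm]
  have hbij : Function.Bijective ![u, v] := by
    refine ⟨fun i j hij => ?_, fun x => ?_⟩
    · fin_cases i <;> fin_cases j <;> simp_all [huv.ne, huv.ne.symm]
    · rcases hall x with rfl | rfl
      exacts [⟨0, rfl⟩, ⟨1, rfl⟩]
  subst htop
  exact ⟨(Iso.completeGraph (Equiv.ofBijective _ hbij)).symm⟩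

lemma eq_top_of_iso_top {W : Type*} (e : G ≃g (⊤ : SimpleGraph W)) : G = ⊤ := by
  ext x y
  rw [← e.map_adj_iff, top_adj, top_adj, e.injective.ne_iff]

lemma isCIS_top [Nonempty V] : (⊤ : SimpleGraph V).IsCIS := by
  intro C S hC hS
  have hCuniv : C = Set.univ := hC.eq_of_subset (IsClique.top _) (Set.subset_univ C)
  obtain ⟨x⟩ := ‹Nonempty V›
  by_contra hempty
  rw [hCuniv, Set.univ_inter, Set.not_nonempty_iff_eq_empty] at hempty
  subst hempty
  exact hS.2 (Set.pairwise_singleton x _) (Set.empty_subset _) rfl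

end SimpleGraph

theorem connected_irreducible_cliqueNum_two_cis_iff_general (G : SimpleGraph V)
    (hconn : G.Connected) (hirr : G.Irreducible) (hω : G.cliqueNum = 2) :
    G.IsCIS ↔ Nonempty (G ≃g (⊤ : SimpleGraph (Fin 2))) := by
  refine ⟨fun hcis => ?_, fun ⟨e⟩ => ?_⟩
  · have h3 : G.CliqueFree 3 := cliqueFree_of_cliqueNum_lt (by omega) (by omega)
    obtain ⟨u, v, hadj⟩ := exists_adj_of_one_lt_cliqueNum (by omega : 1 < G.cliqueNum)
    exact nonempty_iso_top_fin_two hadj <|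
      hconn.preconnected.eq_or_eq_of_adj (fun _ _ _ => hcis.eq_of_adj_of_adj h3 hirr) hadj
  · have : Nonempty V := ⟨e.symm 0⟩
    rw [eq_top_of_iso_top e]
    exact isCIS_top

theorem connected_irreducible_cliqueNum_two_cis_iff (G : SimpleGraph V) [Fintype V]
    (hconn : G.Connected) (hirr : G.Irreducible) (hω : G.cliqueNum = 2) :
    G.IsCIS ↔ Nonempty (G ≃g (⊤ : SimpleGraph (Fin 2))) :=
  connected_irreducible_cliqueNum_two_cis_iff_general G hconn hirr hω
end

section
/- Every vertex-transitive CIS graph is regular, well-covered (all maximal stable sets have the same size), and co-well-covered (all maximal cliques have the same size). -/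
open SimpleGraph

variable {V : Type*}

/-- A graph is vertex-transitive if for every pair of vertices there is an
automorphism mapping one to the other. -/
def SimpleGraph.IsVertexTransitive (G : SimpleGraph V) : Prop :=
  ∀ u v : V, ∃ φ : G ≃g G, φ u = v

/-- The stability (independence) number of a graph, i.e. the clique number of
the complement. -/
noncomputable def SimpleGraph.stabilityNum (G : SimpleGraph V) : ℕ := Gᶜ.cliqueNum

/-! Let `Γ` be the automorphism group, `C` a maximal clique and `S` a maximal stable set. Each
image `φ '' C` is again a maximal clique, so by the CIS property it meets `S`, and in exactly one
vertex, as a clique and a stable set share at most one vertex. Since `Γ` acts transitively,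
exactly `|Γ| / |V|` automorphisms send a given vertex to another, so counting the pairs `(φ, c)`
with `c ∈ C` and `φ c ∈ S` in two ways gives `|Γ| = |C| |S| |Γ| / |V|`, that is
`|C| |S| = |V|`.
Hence all maximal cliques have the same size; the complement of a vertex-transitive CIS graph is
again one, so the same holds for maximal stable sets. -/

open Finset

section Counting

variable {Γ α : Type*} [Group Γ] [MulAction Γ α] [MulAction.IsPretransitive Γ α]
  [Fintype Γ] [Fintype α] [DecidableEq α]

theorem MulAction.card_mul_card_filter_smul_eq (a b : α) :
    Fintype.card α * #{g : Γ | g • a = b} = Fintype.card Γ := by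
  have fiber_card_eq : ∀ c, #{g : Γ | g • a = c} = #{g : Γ | g • a = b} := by
    intro c
    obtain ⟨h, rfl⟩ := exists_smul_eq Γ b c
    exact (card_equiv (Equiv.mulLeft h) fun g => by simp [mul_smul]).symm
  calc Fintype.card α * #{g : Γ | g • a = b}
      = ∑ c, #{g : Γ | g • a = c} := by simp [fiber_card_eq]
    _ = Fintype.card Γ := by rw [sum_card_fiberwise_eq_card_filter]; simp

theorem MulAction.card_mul_sum_card_filter_smul_mem (A B : Finset α) :
    Fintype.card α * ∑ g : Γ, #{a ∈ A | g • a ∈ B} = #A * #B * Fintype.card Γ :=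
  calc Fintype.card α * ∑ g : Γ, #{a ∈ A | g • a ∈ B}
      = Fintype.card α * ∑ a ∈ A, ∑ b ∈ B, #{g : Γ | g • a = b} := by
        simp_rw [sum_card_fiberwise_eq_card_filter]
        exact congrArg _ (sum_card_bipartiteAbove_eq_sum_card_bipartiteBelow _)
    _ = ∑ a ∈ A, ∑ b ∈ B, Fintype.card Γ := by
        simp_rw [mul_sum, card_mul_card_filter_smul_eq]
    _ = #A * #B * Fintype.card Γ := by simp [mul_assoc]

end Counting

namespace SimpleGraph

variable {W : Type*} {G : SimpleGraph V} {G' : SimpleGraph W}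

theorem isStableSet_eq_isClique_compl (G : SimpleGraph V) : G.IsStableSet = Gᶜ.IsClique :=
  funext fun _ => propext (isClique_compl G).symm

theorem Iso.isClique_image_iff (f : G ≃g G') {s : Set V} :
    G'.IsClique (f '' s) ↔ G.IsClique s := by
  have onFun_adj : Function.onFun G'.Adj f = G.Adj := funext₂ fun _ _ => propext f.map_adj_iff
  rw [IsClique, IsClique, f.injective.injOn.pairwise_image, onFun_adj]

theorem Iso.maximal_isClique_image (f : G ≃g G') {s : Set V} (hs : Maximal G.IsClique s) :
    Maximal G'.IsClique (f '' s) := by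
  refine ⟨f.isClique_image_iff.2 hs.1, fun t ht hst y hy => ?_⟩
  have preimage_sub : f.symm '' t ⊆ s :=
    hs.2 (f.symm.isClique_image_iff.2 ht) fun x hx =>
      ⟨f x, hst ⟨x, hx, rfl⟩, f.symm_apply_apply x⟩
  exact ⟨f.symm y, preimage_sub ⟨y, hy, rfl⟩, f.apply_symm_apply y⟩

def Iso.compl (f : G ≃g G') : Gᶜ ≃g G'ᶜ := ⟨f.toEquiv, by simp [Iso.map_adj_iff]⟩

theorem IsClique.subsingleton_inter_of_isStableSet {C S : Set V} (hC : G.IsClique C)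
    (hS : G.IsStableSet S) : (C ∩ S).Subsingleton :=
  fun _ hu _ hv => by_contra fun huv => hS hu.2 hv.2 huv (hC hu.1 hv.1 huv)

theorem IsCIS.ncard_inter_eq_one (hcis : G.IsCIS) {C S : Set V} (hC : Maximal G.IsClique C)
    (hS : Maximal G.IsStableSet S) : (C ∩ S).ncard = 1 := by
  obtain ⟨v, hv⟩ := hcis C S hC hS
  rw [Set.ncard_eq_one]
  exact ⟨v, (hC.1.subsingleton_inter_of_isStableSet hS.1).eq_singleton_of_mem hv⟩

theorem IsVertexTransitive.ncard_neighborSet_eq (hvt : G.IsVertexTransitive) (u v : V) :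
    (G.neighborSet u).ncard = (G.neighborSet v).ncard := by
  obtain ⟨φ, rfl⟩ := hvt v u
  exact Nat.card_congr (φ.mapNeighborSet v).symm

theorem IsVertexTransitive.compl (hvt : G.IsVertexTransitive) : Gᶜ.IsVertexTransitive :=
  fun u v => (hvt u v).imp' Iso.compl fun _ hφ => hφ

theorem IsCIS.compl (hcis : G.IsCIS) : Gᶜ.IsCIS := by
  intro C S hC hS
  rw [isStableSet_eq_isClique_compl, compl_compl] at hS
  rw [← isStableSet_eq_isClique_compl] at hC
  exact Set.inter_comm C S ▸ hcis S C hS hC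

theorem exists_maximal_isClique_ncard_eq_cliqueNum [Finite V] (G : SimpleGraph V) :
    ∃ C, Maximal G.IsClique C ∧ C.ncard = G.cliqueNum := by
  obtain ⟨t, ht⟩ := G.exists_isNClique_cliqueNum
  obtain ⟨C, htC, hC⟩ := Finite.exists_le_maximal ht.isClique
  refine ⟨C, hC, le_antisymm ?_ ?_⟩
  · have hC_fin := C.toFinite
    rw [Set.ncard_eq_toFinset_card C hC_fin]
    exact IsClique.card_le_cliqueNum (tc := by rw [hC_fin.coe_toFinset]; exact hC.1)
  · simpa [ht.card_eq] using Set.ncard_le_ncard htC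

section Fintype

variable [Fintype V]

theorem IsCIS.ncard_mul_ncard_eq_card (hcis : G.IsCIS) (hvt : G.IsVertexTransitive) {C S : Set V}
    (hC : Maximal G.IsClique C) (hS : Maximal G.IsStableSet S) :
    C.ncard * S.ncard = Fintype.card V := by
  classical
  have : Finite (G ≃g G) := .of_injective _ DFunLike.coe_injective
  let _ := Fintype.ofFinite (G ≃g G)
  have : MulAction.IsPretransitive (G ≃g G) V := ⟨hvt⟩
  have one_point : ∀ φ : G ≃g G, #{c ∈ C.toFinset | φ • c ∈ S.toFinset} = 1 := fun φ =>
    calc #{c ∈ C.toFinset | φ • c ∈ S.toFinset} = (C ∩ φ ⁻¹' S).ncard := by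
          rw [← Set.ncard_coe_finset]; congr; ext; simp
      _ = (φ '' C ∩ S).ncard := by
          rw [← Set.image_inter_preimage, Set.ncard_image_of_injective _ φ.injective]
      _ = 1 := hcis.ncard_inter_eq_one (φ.maximal_isClique_image hC) hS
  have key := MulAction.card_mul_sum_card_filter_smul_mem (Γ := G ≃g G) C.toFinset S.toFinset
  simp only [one_point, sum_const, card_univ, smul_eq_mul, mul_one] at key
  rw [Set.ncard_eq_toFinset_card', Set.ncard_eq_toFinset_card']
  exact (Nat.eq_of_mul_eq_mul_right Fintype.card_pos key).symm

theorem IsCIS.ncard_eq_cliqueNum (hcis : G.IsCIS) (hvt : G.IsVertexTransitive) {C : Set V}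
    (hC : Maximal G.IsClique C) : C.ncard = G.cliqueNum := by
  obtain ⟨C₀, hC₀, hC₀_card⟩ := G.exists_maximal_isClique_ncard_eq_cliqueNum
  obtain ⟨S, -, hS⟩ := Finite.exists_le_maximal (p := G.IsStableSet) (Set.pairwise_empty _)
  have hS_pos : 0 < S.ncard := (Set.ncard_pos S.toFinite).2 (hcis C S hC hS).right
  rw [← hC₀_card]
  exact Nat.eq_of_mul_eq_mul_right hS_pos <|
    (hcis.ncard_mul_ncard_eq_card hvt hC hS).trans (hcis.ncard_mul_ncard_eq_card hvt hC₀ hS).symm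

end Fintype

end SimpleGraph

theorem vt_cis_regular_wellCovered (G : SimpleGraph V) [Fintype V]
    (hvt : G.IsVertexTransitive) (hcis : G.IsCIS) :
    (∃ k : ℕ, ∀ v : V, (G.neighborSet v).ncard = k) ∧
    (∀ S : Set V, Maximal G.IsStableSet S → S.ncard = G.stabilityNum) ∧
    (∀ C : Set V, Maximal G.IsClique C → C.ncard = G.cliqueNum) := by
  refine ⟨?_, fun S hS => ?_, fun C hC => hcis.ncard_eq_cliqueNum hvt hC⟩
  · rcases isEmpty_or_nonempty V with _ | ⟨⟨v₀⟩⟩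
    · exact ⟨0, isEmptyElim⟩
    · exact ⟨_, fun v => hvt.ncard_neighborSet_eq v v₀⟩
  · rw [isStableSet_eq_isClique_compl] at hS
    exact hcis.compl.ncard_eq_cliqueNum hvt.compl hS
end

section
/- In a connected irreducible well-covered CIS graph with clique number exactly 3, every edge is contained in exactly one triangle. -/
/-!
Let `uv` be an edge. Two common neighbours `a`, `b` of `u` and `v` are non-adjacent since the
graph is `K₄`-free; then `{u, v, a}` is a maximal clique, and CIS applied to it and the stable
set `{b, t}` forces every neighbour `t` of `a` to be a neighbour of `b`. So `a` and `b` are twins,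
and irreducibility gives `a = b`.

If `uv` lies in no triangle, `{u, v}` is a maximal clique, and CIS applied to it and `{a, b}`
shows that every neighbour `a ≠ v` of `u` is adjacent to every neighbour `b ≠ u` of `v`. If both
sides are nonempty, each `a` lies in a triangle with `u` (otherwise `a` and `v` are twins), whose
third vertex is again a neighbour of `u`; the same holds for `b`, and the two resulting edges
span a `K₄`. If `u` is a pendant vertex, swapping `v` for `u` in a maximal stable set through `v`
gives, by well-coveredness, a maximal stable set missing a maximal clique through `v` and a
second neighbour of `v`. Finally `{u, v}` cannot be a whole component, as `G` has a triangle.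
-/

open SimpleGraph

variable {V : Type*}

namespace SimpleGraph

variable {G : SimpleGraph V} {u v x y a b : V}

def IsWellCovered (G : SimpleGraph V) : Prop :=
  ∀ S T : Set V, Maximal G.IsStableSet S → Maximal G.IsStableSet T → S.ncard = T.ncard

theorem isStableSet_pair (h : ¬G.Adj a b) : G.IsStableSet {a, b} :=
  Set.pairwise_pair.2 fun _ => ⟨h, fun h' => h h'.symm⟩

theorem cliqueFree_of_cliqueNum_lt_s19 [Finite V] {n : ℕ} (h : G.cliqueNum < n) : G.CliqueFree n :=
  fun s hs => by
    have := hs.isClique.card_le_cliqueNum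
    rw [hs.card_eq] at this
    omega

theorem CliqueFree.not_adj_of_mem_commonNeighbors (hG : G.CliqueFree 4) (hxy : G.Adj x y)
    (ha : a ∈ G.commonNeighbors x y) (hb : b ∈ G.commonNeighbors x y) : ¬G.Adj a b := by
  classical
  intro hab
  have hxya : G.IsNClique 3 {x, y, a} := is3Clique_triple_iff.2 ⟨hxy, ha.1, ha.2⟩
  refine (hxya.insert (a := b) ?_).not_cliqueFree hG
  simp only [Finset.mem_insert, Finset.mem_singleton]
  rintro c (rfl | rfl | rfl)
  exacts [hb.1.symm, hb.2.symm, hab.symm]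

theorem maximal_isClique_of_forall_exists_not_adj {s : Set V} (hs : G.IsClique s)
    (h : ∀ t ∉ s, ∃ c ∈ s, ¬G.Adj c t) : Maximal G.IsClique s := by
  refine ⟨hs, fun D hD hsD t ht => by_contra fun hts => ?_⟩
  obtain ⟨c, hc, hct⟩ := h t hts
  exact hct (hD (hsD hc) ht (ne_of_mem_of_not_mem hc hts))

theorem maximal_isClique_pair_s19 (hxy : G.Adj x y) (hno : ∀ w, G.Adj x w → ¬G.Adj y w) :
    Maximal G.IsClique {x, y} := by
  refine maximal_isClique_of_forall_exists_not_adj (isClique_pair.2 fun _ => hxy) fun t _ => ?_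
  by_cases hxt : G.Adj x t
  · exact ⟨y, by simp, hno t hxt⟩
  · exact ⟨x, by simp, hxt⟩

theorem CliqueFree.maximal_isClique_triple (hG : G.CliqueFree 4) (hxy : G.Adj x y)
    (hxa : G.Adj x a) (hya : G.Adj y a) : Maximal G.IsClique {x, y, a} := by
  refine maximal_isClique_of_forall_exists_not_adj ?_ fun t _ => ?_
  · simp [isClique_insert, hxy, hxa, hya, hxy.ne, hxa.ne, hya.ne]
  · by_contra! h
    simp only [Set.mem_insert_iff, Set.mem_singleton_iff, forall_eq_or_imp, forall_eq] at h
    exact hG.not_adj_of_mem_commonNeighbors hxy ⟨hxa, hya⟩ ⟨h.1, h.2.1⟩ h.2.2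

theorem IsWellCovered.maximal_of_ncard_le [Finite V] (hwc : G.IsWellCovered) {S T : Set V}
    (hS : Maximal G.IsStableSet S) (hT : G.IsStableSet T) (h : S.ncard ≤ T.ncard) :
    Maximal G.IsStableSet T := by
  obtain ⟨T', hTT', hT'⟩ := Finite.exists_le_maximal hT
  rwa [Set.eq_of_subset_of_ncard_le hTT' (hwc T' S hT' hS ▸ h)]

theorem IsWellCovered.maximal_insert_diff_singleton [Finite V] (hwc : G.IsWellCovered)
    {S : Set V} (hS : Maximal G.IsStableSet S) (hv : v ∈ S) (huv : G.Adj u v)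
    (hu : ∀ w, G.Adj u w → w = v) : Maximal G.IsStableSet (insert u (S \ {v})) := by
  have huS : u ∉ S \ {v} := fun h => hS.1 h.1 hv huv.ne huv
  refine hwc.maximal_of_ncard_le hS ?_ ?_
  · refine Set.pairwise_insert.2 ⟨hS.1.mono Set.sdiff_subset, fun w hw _ => ?_⟩
    exact ⟨fun h => hw.2 (hu w h), fun h => hw.2 (hu w h.symm)⟩
  · rw [Set.ncard_insert_of_notMem huS, Set.ncard_sdiff_singleton_add_one hv]

theorem IsCIS.exists_forall_not_adj [Finite V] (hcis : G.IsCIS) {C I : Set V}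
    (hC : Maximal G.IsClique C) (hI : G.IsStableSet I) : ∃ c ∈ C, ∀ i ∈ I, ¬G.Adj c i := by
  obtain ⟨S, hIS, hS⟩ := Finite.exists_le_maximal hI
  obtain ⟨c, hcC, hcS⟩ := hcis C S hC hS
  exact ⟨c, hcC, fun i hi hci => hS.1 hcS (hIS hi) hci.ne hci⟩

theorem IsCIS.adj_of_adj_of_adj [Finite V] (hcis : G.IsCIS) (hxy : G.Adj x y)
    (hno : ∀ w, G.Adj x w → ¬G.Adj y w) (hxa : G.Adj x a) (hay : a ≠ y) (hyb : G.Adj y b)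
    (hbx : b ≠ x) : G.Adj a b := by
  by_contra hab
  obtain ⟨c, hc, hcab⟩ := hcis.exists_forall_not_adj (maximal_isClique_pair_s19 hxy hno)
    (isStableSet_pair hab)
  rcases hc with rfl | rfl
  · exact hcab a (by simp) hxa
  · exact hcab b (by simp) hyb

theorem IsCIS.neighborSet_subset_of_not_adj [Finite V] (hcis : G.IsCIS) (hG : G.CliqueFree 4)
    (hxy : G.Adj x y) (ha : a ∈ G.commonNeighbors x y) (hb : b ∈ G.commonNeighbors x y)
    (hab : ¬G.Adj a b) : G.neighborSet a ⊆ G.neighborSet b := by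
  intro t hat
  by_contra hbt
  obtain ⟨c, hc, hcbt⟩ := hcis.exists_forall_not_adj (hG.maximal_isClique_triple hxy ha.1 ha.2)
    (isStableSet_pair hbt)
  simp only [Set.mem_insert_iff, Set.mem_singleton_iff] at hc
  rcases hc with rfl | rfl | rfl
  · exact hcbt b (by simp) hb.1
  · exact hcbt b (by simp) hb.2
  · exact hcbt t (by simp) hat

theorem IsCIS.eq_of_mem_commonNeighbors [Finite V] (hcis : G.IsCIS) (hirr : G.Irreducible)
    (hG : G.CliqueFree 4) (hxy : G.Adj x y) (ha : a ∈ G.commonNeighbors x y)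
    (hb : b ∈ G.commonNeighbors x y) : a = b := by
  have hab : ¬G.Adj a b := hG.not_adj_of_mem_commonNeighbors hxy ha hb
  exact hirr a b ((hcis.neighborSet_subset_of_not_adj hG hxy ha hb hab).antisymm
    (hcis.neighborSet_subset_of_not_adj hG hxy hb ha fun h => hab h.symm))

theorem IsCIS.neighborSet_eq_of_triangleFree [Finite V] (hcis : G.IsCIS) (huv : G.Adj u v)
    (hua : G.Adj u a) (hav : a ≠ v) (hno_v : ∀ w, G.Adj u w → ¬G.Adj v w)
    (hno_a : ∀ w, G.Adj u w → ¬G.Adj a w) : G.neighborSet a = G.neighborSet v := by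
  ext t
  simp only [mem_neighborSet]
  by_cases htu : t = u
  · subst htu
    exact ⟨fun _ => huv.symm, fun _ => hua.symm⟩
  constructor
  · intro hat
    exact (hcis.adj_of_adj_of_adj hua.symm (fun w h h' => hno_a w h' h) hat htu huv
      hav.symm).symm
  · exact fun hvt => hcis.adj_of_adj_of_adj huv hno_v hua hav hvt htu

theorem IsCIS.exists_adj_of_triangleFree [Finite V] (hcis : G.IsCIS) (hirr : G.Irreducible)
    (huv : G.Adj u v) (hno : ∀ w, G.Adj u w → ¬G.Adj v w) (hua : G.Adj u a) (hav : a ≠ v) :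
    ∃ b, G.Adj u b ∧ b ≠ v ∧ G.Adj a b := by
  by_contra! h
  refine hav (hirr a v (hcis.neighborSet_eq_of_triangleFree huv hua hav hno fun w huw haw => ?_))
  by_cases hwv : w = v
  · exact hno a hua (hwv ▸ haw).symm
  · exact h w huw hwv haw

theorem IsCIS.exists_adj_adj_of_adj_of_adj [Finite V] (hcis : G.IsCIS) (hirr : G.Irreducible)
    (hG : G.CliqueFree 4) (huv : G.Adj u v) (hua : G.Adj u a) (hav : a ≠ v) (hvb : G.Adj v b)
    (hbu : b ≠ u) : ∃ w, G.Adj u w ∧ G.Adj v w := by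
  by_contra! hno
  have hno' : ∀ w, G.Adj v w → ¬G.Adj u w := fun w hvw huw => hno w huw hvw
  obtain ⟨a', hua', ha'v, haa'⟩ := hcis.exists_adj_of_triangleFree hirr huv hno hua hav
  obtain ⟨b', hvb', hb'u, hbb'⟩ := hcis.exists_adj_of_triangleFree hirr huv.symm hno' hvb hbu
  have join : ∀ {p q}, G.Adj u p → p ≠ v → G.Adj v q → q ≠ u → G.Adj p q :=
    hcis.adj_of_adj_of_adj huv hno
  exact hG.not_adj_of_mem_commonNeighbors haa' ⟨join hua hav hvb hbu, join hua' ha'v hvb hbu⟩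
    ⟨join hua hav hvb' hb'u, join hua' ha'v hvb' hb'u⟩ hbb'

theorem IsCIS.eq_of_adj_of_pendant [Finite V] (hcis : G.IsCIS) (hwc : G.IsWellCovered)
    (huv : G.Adj u v) (hu : ∀ w, G.Adj u w → w = v) (hvb : G.Adj v b) : b = u := by
  by_contra hbu
  obtain ⟨S, hvS, hS⟩ :=
    Finite.exists_le_maximal (show G.IsStableSet {v} from Set.pairwise_singleton _ _)
  have hvS' : v ∈ S := hvS (Set.mem_singleton v)
  obtain ⟨C, hvbC, hC⟩ := Finite.exists_le_maximal (isClique_pair.2 fun _ => hvb)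
  have hvC : v ∈ C := hvbC (by simp)
  have hbC : b ∈ C := hvbC (by simp)
  obtain ⟨z, hzC, hzS⟩ := hcis C _ hC (hwc.maximal_insert_diff_singleton hS hvS' huv hu)
  rcases hzS with rfl | ⟨hzS, hzv⟩
  · exact hvb.ne (hu b (hC.1 hzC hbC (Ne.symm hbu))).symm
  · exact hS.1 hzS hvS' hzv (hC.1 hzC hvC hzv)

theorem Connected.card_le_two_of_forall_adj_eq [Fintype V] (hconn : G.Connected)
    (hu : ∀ w, G.Adj u w → w = v) (hv : ∀ w, G.Adj v w → w = u) : Fintype.card V ≤ 2 := by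
  classical
  rw [← Finset.card_univ]
  refine (Finset.card_le_card (t := {u, v}) fun t _ => ?_).trans Finset.card_le_two
  by_contra ht
  obtain ⟨p⟩ := hconn.preconnected u t
  obtain ⟨d, -, hd, hd'⟩ := p.exists_boundary_dart {u, v} (by simp) (by simpa using ht)
  rcases hd with hd | hd
  · exact hd' (Or.inr (hu _ (hd ▸ d.adj)))
  · exact hd' (Or.inl (hv _ (hd ▸ d.adj)))

end SimpleGraph

theorem edge_in_unique_triangle (G : SimpleGraph V) [Fintype V]
    (hconn : G.Connected) (hirr : G.Irreducible)
    (hwc : ∀ S T : Set V, Maximal G.IsStableSet S → Maximal G.IsStableSet T →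
      S.ncard = T.ncard)
    (hcis : G.IsCIS) (hω : G.cliqueNum = 3)
    (u v : V) (huv : G.Adj u v) :
    ∃! w : V, G.Adj u w ∧ G.Adj v w := by
  have hK4 : G.CliqueFree 4 := cliqueFree_of_cliqueNum_lt_s19 (by omega)
  refine existsUnique_of_exists_of_unique ?_ fun a b ha hb =>
    hcis.eq_of_mem_commonNeighbors hirr hK4 huv ha hb
  by_cases hu : ∀ a, G.Adj u a → a = v
  · by_cases hv : ∀ b, G.Adj v b → b = u
    · obtain ⟨s, hs⟩ := G.exists_isNClique_cliqueNum
      exact ((hω ▸ hs).not_cliqueFree (cliqueFree_of_card_lt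
        ((hconn.card_le_two_of_forall_adj_eq hu hv).trans_lt (by norm_num)))).elim
    push Not at hv
    obtain ⟨b, hvb, hbu⟩ := hv
    exact (hbu (hcis.eq_of_adj_of_pendant hwc huv hu hvb)).elim
  push Not at hu
  obtain ⟨a, hua, hav⟩ := hu
  by_cases hv : ∀ b, G.Adj v b → b = u
  · exact (hav (hcis.eq_of_adj_of_pendant hwc huv.symm hv hua)).elim
  push Not at hv
  obtain ⟨b, hvb, hbu⟩ := hv
  exact hcis.exists_adj_adj_of_adj_of_adj hirr hK4 huv hua hav hvb hbu
end
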